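/- Shuffle relation for iterated simplex integrals (Proposition 1.2): Let k = (k_1,…,k_p) and l = (l_1,…,l_q) be tuples of positive integers with k_1 ≥ 2 and l_1 ≥ 2, and set n = k_1+…+k_p, m = l_1+…+l_q. Then (∫_{Δ_n} ω_{w(k)})·(∫_{Δ_m} ω_{w(l)}) = Σ_{w ∈ sh(w(k), w(l))} ∫_{Δ_{n+m}} ω_w, where the sum runs over the multiset sh(w(k), w(l)) of shuffles of the two words; in particular ζ(k)·ζ(l) = Σ_{w ∈ sh(w(k),w(l))} ∫_{Δ_{n+m}} ω_w. -/

import Mathlib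

open MeasureTheory

/-- The multiple zeta value `ζ(k₁,…,k_p) = ∑_{n₁ > … > n_p > 0} 1/(n₁^{k₁} ⋯ n_p^{k_p})`. -/
noncomputable def zeta (k : List ℕ) : ℝ :=
  ∑' n : {f : Fin k.length → ℕ // StrictAnti f ∧ ∀ i, 0 < f i},
    ∏ i : Fin k.length, (1 : ℝ) / (n.1 i : ℝ) ^ (k.get i)

/-- The multiset `sh(u,v)` of individual terms of the shuffle product `u ⧢ v`. -/
def shuffles {α : Type*} : List α → List α → Multiset (List α)
  | [], v => {v}
  | u, [] => {u}
  | a :: u, b :: v =>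
      (shuffles u (b :: v)).map (a :: ·) + (shuffles (a :: u) v).map (b :: ·)
termination_by u v => u.length + v.length
decreasing_by all_goals simp +arith +decide

/-- The word `w(k) = (1, 0^{k_p−1}, 1, 0^{k_{p−1}−1}, …, 1, 0^{k_1−1})` in `{0,1}`
(`true` standing for `1` and `false` for `0`) attached to the tuple `k = (k₁,…,k_p)`. -/
def word (k : List ℕ) : List Bool :=
  (k.reverse.map (fun a => true :: List.replicate (a - 1) false)).flatten

/-- `h 1 t = 1/(1−t)` and `h 0 t = 1/t`. -/
noncomputable def h (b : Bool) (t : ℝ) : ℝ := if b then 1 / (1 - t) else 1 / t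

/-- The open simplex `Δ_N = {0 < t₁ < … < t_N < 1}`. -/
def simplex (N : ℕ) : Set (Fin N → ℝ) :=
  {t | StrictMono t ∧ ∀ i, t i ∈ Set.Ioo (0 : ℝ) 1}

/-- `∫_{Δ_N} ω_w`, the Lebesgue integral of `H_w(t) = ∏ᵢ h_{wᵢ}(tᵢ)` over the open
simplex of dimension the length of the word `w`. -/
noncomputable def simplexIntegral (w : List Bool) : ℝ :=
  ∫ t in simplex w.length, ∏ i : Fin w.length, h (w.get i) (t i)

/-!
Write `I_w(y) = ∫_{0 < t_1 < ⋯ < t_N < y} H_w`. Peeling off the largest variable gives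
`I_{w·b}(y) = ∫_0^y h_b(t) I_w(t) dt`, and splitting the square `(0, y)²` along its null diagonal
gives the product rule `I_{u·a} I_{v·b} = ∫ h_a I_u I_{v·b} + ∫ h_b I_{u·a} I_v`. This is the
recursion of the shuffle product read from the right, so `I_u I_v = ∑_{w ∈ sh(u,v)} I_w`
in `[0, ∞]`.

Expanding `1/(1 - t) = ∑ tⁿ` and integrating term by term shows that `I_{w(k)}(y)` is the multiple
polylogarithm `∑_{n_1 > ⋯ > n_p > 0} y^{n_1} / (n_1^{k_1} ⋯ n_p^{k_p})`, which is `ζ(k)` at `y = 1`.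
For `k_1 ≥ 2` it is finite, so the identity passes from `[0, ∞]` to `ℝ`.
-/

open ENNReal Set

section Shuffles

variable {α : Type*}

@[simp]
theorem shuffles_nil_left (v : List α) : shuffles [] v = {v} := by
  cases v <;> simp [shuffles]

@[simp]
theorem shuffles_nil_right (u : List α) : shuffles u [] = {u} := by
  cases u <;> simp [shuffles]

theorem shuffles_cons_cons (a b : α) (u v : List α) :
    shuffles (a :: u) (b :: v) =
      (shuffles u (b :: v)).map (a :: ·) + (shuffles (a :: u) v).map (b :: ·) := by
  rw [shuffles]

theorem shuffles_append_singleton :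
    ∀ (u v : List α) (a b : α), shuffles (u ++ [a]) (v ++ [b]) =
      (shuffles u (v ++ [b])).map (· ++ [a]) + (shuffles (u ++ [a]) v).map (· ++ [b])
  | [], [], a, b => by simp [shuffles_cons_cons, add_comm]
  | [], d :: v, a, b => by
    have ih := shuffles_append_singleton [] v a b
    simp only [List.nil_append, List.cons_append, shuffles_cons_cons] at ih ⊢
    simp [ih, Multiset.map_map, Multiset.cons_swap]
  | c :: u, [], a, b => by
    have ih := shuffles_append_singleton u [] a b
    simp only [List.nil_append, List.cons_append, shuffles_cons_cons] at ih ⊢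
    simp [ih, Multiset.map_map]
    abel
  | c :: u, d :: v, a, b => by
    have ih₁ := shuffles_append_singleton u (d :: v) a b
    have ih₂ := shuffles_append_singleton (c :: u) v a b
    simp only [List.cons_append, shuffles_cons_cons] at ih₁ ih₂ ⊢
    simp [ih₁, ih₂, Multiset.map_map]
    abel
termination_by u v => u.length + v.length

theorem shuffles_reverse :
    ∀ u v : List α, shuffles u.reverse v.reverse = (shuffles u v).map List.reverse
  | [], v => by simp
  | a :: u, [] => by simp
  | a :: u, b :: v => by
    rw [List.reverse_cons, List.reverse_cons, shuffles_append_singleton, ← List.reverse_cons,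
      ← List.reverse_cons, shuffles_reverse u, shuffles_reverse _ v, shuffles_cons_cons]
    simp [Multiset.map_map]
termination_by u v => u.length + v.length

end Shuffles

theorem lintegral_mul_lintegral_eq_add {μ : Measure ℝ} [SFinite μ] [NullSingletonClass μ]
    {φ ψ : ℝ → ℝ≥0∞} (hφ : Measurable φ) (hψ : Measurable ψ) :
    (∫⁻ s, φ s ∂μ) * ∫⁻ t, ψ t ∂μ =
      ∫⁻ s, φ s * ∫⁻ t in Iio s, ψ t ∂μ ∂μ + ∫⁻ t, ψ t * ∫⁻ s in Iio t, φ s ∂μ ∂μ := by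
  have hmono : Monotone fun s => ∫⁻ t in Iio s, ψ t ∂μ :=
    fun _ _ hst => lintegral_mono_set (Iio_subset_Iio hst)
  have hswap : ∫⁻ s, φ s * ∫⁻ t in Ici s, ψ t ∂μ ∂μ = ∫⁻ t, ψ t * ∫⁻ s in Iio t, φ s ∂μ ∂μ := by
    have hF : Measurable (Function.uncurry fun s t => {p : ℝ × ℝ | p.1 ≤ p.2}.indicator
        (fun p => φ p.1 * ψ p.2) (s, t)) :=
      ((hφ.comp measurable_fst).mul (hψ.comp measurable_snd)).indicator
        (measurableSet_le measurable_fst measurable_snd)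
    calc ∫⁻ s, φ s * ∫⁻ t in Ici s, ψ t ∂μ ∂μ
        = ∫⁻ s, ∫⁻ t, {p : ℝ × ℝ | p.1 ≤ p.2}.indicator (fun p => φ p.1 * ψ p.2) (s, t) ∂μ ∂μ := by
          refine lintegral_congr fun s => ?_
          rw [← lintegral_const_mul _ hψ, ← lintegral_indicator measurableSet_Ici]
          rfl
      _ = ∫⁻ t, ∫⁻ s, {p : ℝ × ℝ | p.1 ≤ p.2}.indicator (fun p => φ p.1 * ψ p.2) (s, t) ∂μ ∂μ :=
          lintegral_lintegral_swap hF.aemeasurable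
      _ = ∫⁻ t, ψ t * ∫⁻ s in Iic t, φ s ∂μ ∂μ := by
          refine lintegral_congr fun t => ?_
          rw [← lintegral_const_mul _ hφ, ← lintegral_indicator measurableSet_Iic]
          congr 1 with s
          by_cases h : s ≤ t <;> simp [h, indicator, mul_comm]
      _ = ∫⁻ t, ψ t * ∫⁻ s in Iio t, φ s ∂μ ∂μ := by
          simp_rw [setLIntegral_congr (Iio_ae_eq_Iic (μ := μ))]
  calc (∫⁻ s, φ s ∂μ) * ∫⁻ t, ψ t ∂μ
      = ∫⁻ s, φ s * (∫⁻ t in Iio s, ψ t ∂μ + ∫⁻ t in Ici s, ψ t ∂μ) ∂μ := by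
        rw [← lintegral_mul_const _ hφ]
        simp_rw [← compl_Iio, lintegral_add_compl _ measurableSet_Iio]
    _ = _ := by
        simp_rw [mul_add]
        rw [lintegral_add_left (f := fun s => φ s * ∫⁻ t in Iio s, ψ t ∂μ)
          (hφ.mul hmono.measurable), hswap]

noncomputable def primitive (g F : ℝ → ℝ≥0∞) (y : ℝ) : ℝ≥0∞ := ∫⁻ t in Ioo 0 y, g t * F t

theorem monotone_primitive (g F : ℝ → ℝ≥0∞) : Monotone (primitive g F) :=
  fun _ _ hyz => lintegral_mono_set (Ioo_subset_Ioo_right hyz)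

theorem primitive_mul_primitive {g F g' F' : ℝ → ℝ≥0∞} (hg : Measurable g) (hF : Measurable F)
    (hg' : Measurable g') (hF' : Measurable F') (y : ℝ) :
    primitive g F y * primitive g' F' y =
      primitive g (F * primitive g' F') y + primitive g' (primitive g F * F') y := by
  have hIio : ∀ {s}, s ∈ Ioo 0 y → ∀ χ : ℝ → ℝ≥0∞,
      ∫⁻ t in Iio s, χ t ∂volume.restrict (Ioo 0 y) = ∫⁻ t in Ioo 0 s, χ t := by
    intro s hs χ
    rw [Measure.restrict_restrict measurableSet_Iio, Iio_inter_Ioo, min_eq_left hs.2.le]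
  rw [primitive, primitive, lintegral_mul_lintegral_eq_add (φ := fun t => g t * F t)
    (ψ := fun t => g' t * F' t) (hg.mul hF) (hg'.mul hF')]
  congr 1 <;> refine setLIntegral_congr_fun measurableSet_Ioo fun s hs => ?_
  · rw [hIio hs, Pi.mul_apply, primitive, mul_assoc]
  · rw [hIio hs, Pi.mul_apply, primitive, mul_comm (∫⁻ _ in _, _), mul_assoc]

theorem primitive_multiset_sum {ι : Type*} {g : ℝ → ℝ≥0∞} {G : ι → ℝ → ℝ≥0∞} (hg : Measurable g)
    (hG : ∀ i, Measurable (G i)) (s : Multiset ι) (y : ℝ) :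
    primitive g (fun t => (s.map fun i => G i t).sum) y =
      (s.map fun i => primitive g (G i) y).sum := by
  induction s using Multiset.induction with
  | empty => simp [primitive]
  | cons i s ih =>
    simp only [Multiset.map_cons, Multiset.sum_cons, primitive, mul_add] at ih ⊢
    rw [lintegral_add_left (f := fun t => g t * G i t) (hg.mul (hG i)), ih]

theorem primitive_tsum {ι : Type*} [Countable ι] {g : ℝ → ℝ≥0∞} {F : ι → ℝ → ℝ≥0∞}
    (hg : Measurable g) (hF : ∀ i, Measurable (F i)) (c : ι → ℝ≥0∞) (y : ℝ) :
    primitive g (fun t => ∑' i, c i * F i t) y = ∑' i, c i * primitive g (F i) y := by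
  simp only [primitive, ← ENNReal.tsum_mul_left]
  rw [lintegral_tsum (f := fun i t => g t * (c i * F i t))
    fun i => (hg.mul (measurable_const.mul (hF i))).aemeasurable]
  congr 1 with i
  simp_rw [mul_left_comm (g _)]
  exact lintegral_const_mul _ (hg.mul (hF i))

theorem eqOn_primitive (g : ℝ → ℝ≥0∞) {b : ℝ} {F G : ℝ → ℝ≥0∞} (hFG : EqOn F G (Icc 0 b)) :
    EqOn (primitive g F) (primitive g G) (Icc 0 b) := fun _ hy =>
  setLIntegral_congr_fun measurableSet_Ioo fun t ht => by rw [hFG ⟨ht.1.le, ht.2.le.trans hy.2⟩]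

theorem eqOn_foldr_primitive {α : Type*} (f : α → ℝ → ℝ≥0∞) (w : List α) {b : ℝ}
    {F G : ℝ → ℝ≥0∞} (hFG : EqOn F G (Icc 0 b)) :
    EqOn (w.foldr (fun a => primitive (f a)) F) (w.foldr (fun a => primitive (f a)) G)
      (Icc 0 b) := by
  induction w with
  | nil => exact hFG
  | cons a w ih => exact eqOn_primitive (f a) ih

section IteratedIntegral

variable {α : Type*} (f : α → ℝ → ℝ≥0∞)

/-- `iteratedIntegral f [a_1, …, a_N] y = ∫_{y > t_1 > ⋯ > t_N > 0} ∏ i, f a_i t_i`: the head of the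
word carries the outermost, largest variable. -/
noncomputable def iteratedIntegral (w : List α) : ℝ → ℝ≥0∞ :=
  w.foldr (fun a => primitive (f a)) 1

@[simp]
theorem iteratedIntegral_nil : iteratedIntegral f [] = 1 := rfl

theorem iteratedIntegral_cons (a : α) (w : List α) :
    iteratedIntegral f (a :: w) = primitive (f a) (iteratedIntegral f w) := rfl

theorem iteratedIntegral_append (u v : List α) :
    iteratedIntegral f (u ++ v) = u.foldr (fun a => primitive (f a)) (iteratedIntegral f v) :=
  List.foldr_append

theorem measurable_iteratedIntegral : ∀ w, Measurable (iteratedIntegral f w)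
  | [] => measurable_const
  | _ :: _ => (monotone_primitive _ _).measurable

variable {f}

theorem iteratedIntegral_mul_eq_sum_shuffles (hf : ∀ a, Measurable (f a)) :
    ∀ (u v : List α) (y : ℝ), iteratedIntegral f u y * iteratedIntegral f v y =
      ((shuffles u v).map fun w => iteratedIntegral f w y).sum
  | [], v, y => by simp
  | a :: u, [], y => by simp
  | a :: u, b :: v, y => by
    have ih₁ : iteratedIntegral f u * iteratedIntegral f (b :: v) =
        fun t => ((shuffles u (b :: v)).map fun w => iteratedIntegral f w t).sum :=
      funext (iteratedIntegral_mul_eq_sum_shuffles hf u (b :: v))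
    have ih₂ : iteratedIntegral f (a :: u) * iteratedIntegral f v =
        fun t => ((shuffles (a :: u) v).map fun w => iteratedIntegral f w t).sum :=
      funext (iteratedIntegral_mul_eq_sum_shuffles hf (a :: u) v)
    have hI := measurable_iteratedIntegral f
    rw [iteratedIntegral_cons, iteratedIntegral_cons,
      primitive_mul_primitive (hf a) (hI u) (hf b) (hI v), ← iteratedIntegral_cons,
      ← iteratedIntegral_cons, ih₁, ih₂, primitive_multiset_sum (hf a) hI,
      primitive_multiset_sum (hf b) hI, shuffles_cons_cons, Multiset.map_add, Multiset.sum_add,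
      Multiset.map_map, Multiset.map_map]
    rfl
termination_by u v => u.length + v.length

end IteratedIntegral

def scaledSimplex (N : ℕ) (y : ℝ) : Set (Fin N → ℝ) :=
  {t | StrictMono t ∧ ∀ i, t i ∈ Ioo 0 y}

theorem measurableSet_scaledSimplex (N : ℕ) (y : ℝ) : MeasurableSet (scaledSimplex N y) := by
  have hmono : MeasurableSet {t : Fin N → ℝ | StrictMono t} := by
    simp only [StrictMono, ofPred_forall]
    refine .iInter fun i => .iInter fun j => ?_
    by_cases hij : i < j
    · simpa [hij] using measurableSet_lt (measurable_pi_apply i) (measurable_pi_apply j)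
    · simp [hij]
  have hsimplex : scaledSimplex N y = {t | StrictMono t} ∩ ⋂ i, (fun t => t i) ⁻¹' Ioo 0 y := by
    ext; simp [scaledSimplex]
  rw [hsimplex]
  exact hmono.inter (.iInter fun i => measurableSet_Ioo.preimage (measurable_pi_apply i))

theorem snoc_mem_scaledSimplex_iff {N : ℕ} (s : Fin N → ℝ) (x y : ℝ) :
    Fin.snoc s x ∈ scaledSimplex (N + 1) y ↔ x ∈ Ioo 0 y ∧ s ∈ scaledSimplex N x := by
  simp only [scaledSimplex, mem_ofPred_eq, Fin.forall_fin_succ', ← Fin.insertNth_last',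
    Fin.strictMono_insertNth_iff]
  simp only [Fin.castSucc_lt_last, forall_const, Fin.insertNth_last', Fin.snoc_castSucc,
    Fin.snoc_last, mem_Ioo]
  grind

theorem indicator_scaledSimplex_snoc {α : Type*} (f : α → ℝ → ℝ≥0∞) {N : ℕ}
    (c : Fin (N + 1) → α) (x y : ℝ) (s : Fin N → ℝ) :
    (scaledSimplex (N + 1) y).indicator (fun t => ∏ i, f (c i) (t i)) (Fin.snoc s x) =
      (Ioo 0 y).indicator (fun x => f (c (Fin.last N)) x *
        (scaledSimplex N x).indicator (fun s => ∏ j, f (c j.castSucc) (s j)) s) x := by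
  by_cases hx : x ∈ Ioo 0 y <;> by_cases hs : s ∈ scaledSimplex N x <;>
    simp [indicator, snoc_mem_scaledSimplex_iff, hx, hs, Fin.prod_univ_castSucc, mul_comm]

theorem setLIntegral_scaledSimplex_prod {α : Type*} {f : α → ℝ → ℝ≥0∞}
    (hf : ∀ a, Measurable (f a)) :
    ∀ {N : ℕ} (c : Fin N → α) (y : ℝ),
      ∫⁻ t in scaledSimplex N y, ∏ i, f (c i) (t i) = iteratedIntegral f (List.ofFn c).reverse y
  | 0, c, y => by
    have : scaledSimplex 0 y = univ := by
      ext t; simp [scaledSimplex, Subsingleton.strictMono t]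
    simp [this, volume_pi]
  | N + 1, c, y => by
    set e := MeasurableEquiv.piFinSuccAbove (fun _ : Fin (N + 1) => ℝ) (Fin.last N)
    have he : MeasurePreserving e.symm (volume.prod volume) volume :=
      (volume_preserving_piFinSuccAbove (fun _ => ℝ) (Fin.last N)).symm
    have he_symm : ∀ p, e.symm p = Fin.snoc p.2 p.1 := fun p => by
      simp [e, MeasurableEquiv.piFinSuccAbove_symm_apply]
      rfl
    have hprod : ∀ {M} (c : Fin M → α), Measurable fun t : Fin M → ℝ => ∏ i, f (c i) (t i) :=
      fun c => Finset.measurable_prod _ fun i _ => (hf (c i)).comp (measurable_pi_apply i)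
    set G := (scaledSimplex (N + 1) y).indicator fun t => ∏ i, f (c i) (t i)
    have hGm : Measurable G := (hprod c).indicator (measurableSet_scaledSimplex _ _)
    calc ∫⁻ t in scaledSimplex (N + 1) y, ∏ i, f (c i) (t i)
        = ∫⁻ x, ∫⁻ s, G (e.symm (x, s)) := by
          rw [← lintegral_indicator (measurableSet_scaledSimplex _ _),
            ← he.lintegral_comp_emb e.symm.measurableEmbedding,
            lintegral_prod (fun p => G (e.symm p)) (hGm.comp e.symm.measurable).aemeasurable]
      _ = ∫⁻ x, (Ioo 0 y).indicator (fun x => f (c (Fin.last N)) x *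
            iteratedIntegral f (List.ofFn fun j => c j.castSucc).reverse x) x := by
          refine lintegral_congr fun x => ?_
          simp_rw [he_symm, G, indicator_scaledSimplex_snoc]
          by_cases hx : x ∈ Ioo 0 y
          · simp only [indicator_of_mem hx]
            rw [lintegral_const_mul _ ((hprod _).indicator (measurableSet_scaledSimplex _ _)),
              lintegral_indicator (measurableSet_scaledSimplex _ _),
              setLIntegral_scaledSimplex_prod hf]
          · simp [hx]
      _ = iteratedIntegral f (List.ofFn c).reverse y := by
          rw [lintegral_indicator measurableSet_Ioo, List.ofFn_succ', List.concat_eq_append,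
            List.reverse_append]
          rfl

theorem ENNReal.toReal_multiset_sum {s : Multiset ℝ≥0∞} (hs : s.sum ≠ ∞) :
    s.sum.toReal = (s.map ENNReal.toReal).sum := by
  induction s using Multiset.induction with
  | empty => simp
  | cons x s ih =>
    rw [Multiset.sum_cons, ENNReal.add_ne_top] at hs
    rw [Multiset.sum_cons, Multiset.map_cons, Multiset.sum_cons, ENNReal.toReal_add hs.1 hs.2,
      ih hs.2]

noncomputable def hENN (b : Bool) (t : ℝ) : ℝ≥0∞ := ENNReal.ofReal (h b t)

theorem measurable_h (b : Bool) : Measurable (h b) := by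
  unfold h
  cases b <;> simp only [Bool.false_eq_true, if_true, if_false] <;> fun_prop

theorem measurable_hENN (b : Bool) : Measurable (hENN b) :=
  (measurable_h b).ennreal_ofReal

theorem h_nonneg (b : Bool) {t : ℝ} (ht : t ∈ Ioo 0 1) : 0 ≤ h b t := by
  cases b
  · exact one_div_nonneg.2 ht.1.le
  · exact one_div_nonneg.2 (sub_nonneg.2 ht.2.le)

theorem simplexIntegral_eq_toReal (w : List Bool) :
    simplexIntegral w = (iteratedIntegral hENN w.reverse 1).toReal := by
  have hmeas : MeasurableSet (simplex w.length) := measurableSet_scaledSimplex _ _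
  have hnonneg : ∀ t ∈ simplex w.length, ∀ i, 0 ≤ h (w.get i) (t i) :=
    fun t ht i => h_nonneg _ (ht.2 i)
  have hiter := setLIntegral_scaledSimplex_prod measurable_hENN w.get 1
  rw [List.ofFn_get] at hiter
  rw [simplexIntegral, integral_eq_lintegral_of_nonneg_ae
    ((ae_restrict_iff' hmeas).2 (.of_forall fun t ht =>
      Finset.prod_nonneg fun i _ => hnonneg t ht i))
    (Finset.measurable_prod _ fun i _ =>
      (measurable_h _).comp (measurable_pi_apply i)).aestronglyMeasurable,
    ← hiter]
  congr 1
  refine setLIntegral_congr_fun hmeas fun t ht => ?_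
  rw [ENNReal.ofReal_prod_of_nonneg fun i _ => hnonneg t ht i]
  rfl

theorem simplexIntegral_mul_eq_sum_shuffles {u v : List Bool}
    (hu : iteratedIntegral hENN u.reverse 1 ≠ ∞) (hv : iteratedIntegral hENN v.reverse 1 ≠ ∞) :
    simplexIntegral u * simplexIntegral v = ((shuffles u v).map simplexIntegral).sum := by
  have hsum := iteratedIntegral_mul_eq_sum_shuffles measurable_hENN u.reverse v.reverse 1
  rw [shuffles_reverse, Multiset.map_map] at hsum
  rw [simplexIntegral_eq_toReal, simplexIntegral_eq_toReal, ← ENNReal.toReal_mul, hsum,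
    ENNReal.toReal_multiset_sum (hsum ▸ ENNReal.mul_ne_top hu hv), Multiset.map_map]
  simp_rw [simplexIntegral_eq_toReal]
  rfl

theorem lintegral_Ioo_ofReal_pow {y : ℝ} (hy : 0 ≤ y) (n : ℕ) :
    ∫⁻ t in Ioo 0 y, ENNReal.ofReal t ^ n =
      ENNReal.ofReal y ^ (n + 1) * ((n + 1 : ℕ) : ℝ≥0∞)⁻¹ := by
  have hint : IntegrableOn (fun t : ℝ => t ^ n) (Ioo 0 y) :=
    (intervalIntegrable_iff_integrableOn_Ioo_of_le hy).1 (intervalIntegral.intervalIntegrable_pow n)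
  calc ∫⁻ t in Ioo 0 y, ENNReal.ofReal t ^ n = ∫⁻ t in Ioo 0 y, ENNReal.ofReal (t ^ n) :=
        setLIntegral_congr_fun measurableSet_Ioo fun t ht => (ofReal_pow ht.1.le n).symm
    _ = ENNReal.ofReal (∫ t in Ioo 0 y, t ^ n) :=
        (ofReal_integral_eq_lintegral_ofReal hint ((ae_restrict_iff' measurableSet_Ioo).2
          (.of_forall fun t ht => pow_nonneg ht.1.le n))).symm
    _ = ENNReal.ofReal (y ^ (n + 1) / (n + 1 : ℕ)) := by
        rw [← integral_Ioc_eq_integral_Ioo, ← intervalIntegral.integral_of_le hy, integral_pow]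
        simp
    _ = _ := by
        rw [ENNReal.ofReal_div_of_pos (by positivity), div_eq_mul_inv, ofReal_pow hy,
          ofReal_natCast]

theorem primitive_hENN_false_pow {n : ℕ} (hn : n ≠ 0) (y : ℝ) :
    primitive (hENN false) (fun t => ENNReal.ofReal t ^ n) y =
      ENNReal.ofReal y ^ n * (n : ℝ≥0∞)⁻¹ := by
  rcases le_total y 0 with hy | hy
  · simp [primitive, Ioo_eq_empty (not_lt.2 hy), ofReal_of_nonpos hy, zero_pow hn]
  obtain ⟨m, rfl⟩ := Nat.exists_eq_succ_of_ne_zero hn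
  rw [← lintegral_Ioo_ofReal_pow hy m]
  refine setLIntegral_congr_fun measurableSet_Ioo fun t ht => ?_
  have hpos : ENNReal.ofReal t ≠ 0 := (ofReal_pos.2 ht.1).ne'
  simp only [hENN, h, Bool.false_eq_true, if_false, one_div, ofReal_inv_of_pos ht.1, pow_succ']
  rw [← mul_assoc, ENNReal.inv_mul_cancel hpos ofReal_ne_top, one_mul]

theorem primitive_hENN_true_pow (n : ℕ) {y : ℝ} (hy : y ∈ Icc 0 1) :
    primitive (hENN true) (fun t => ENNReal.ofReal t ^ n) y =
      ∑' m, ENNReal.ofReal y ^ (n + m + 1) * ((n + m + 1 : ℕ) : ℝ≥0∞)⁻¹ := by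
  have hgeom : ∀ t ∈ Ioo 0 y,
      hENN true t * ENNReal.ofReal t ^ n = ∑' m, ENNReal.ofReal t ^ (n + m) := by
    intro t ht
    have ht1 : t < 1 := ht.2.trans_le hy.2
    rw [hENN, h, if_pos rfl, one_div, ofReal_inv_of_pos (sub_pos.2 ht1),
      ENNReal.ofReal_sub _ ht.1.le, ofReal_one, ← ENNReal.tsum_geometric, ← ENNReal.tsum_mul_right]
    simp_rw [pow_add, mul_comm]
  rw [primitive, setLIntegral_congr_fun measurableSet_Ioo hgeom,
    lintegral_tsum (f := fun m t => ENNReal.ofReal t ^ (n + m))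
      fun m => (measurable_id.ennreal_ofReal.pow_const _).aemeasurable]
  simp_rw [lintegral_Ioo_ofReal_pow hy.1]

theorem foldr_replicate_false_tsum {ι : Type*} [Countable ι] (c : ι → ℝ≥0∞) {n : ι → ℕ}
    (hn : ∀ i, n i ≠ 0) (j : ℕ) :
    (List.replicate j false).foldr (fun b => primitive (hENN b))
        (fun y => ∑' i, c i * ENNReal.ofReal y ^ n i) =
      fun y => ∑' i, c i * (n i : ℝ≥0∞)⁻¹ ^ j * ENNReal.ofReal y ^ n i := by
  induction j with
  | zero => simp
  | succ j ih =>
    ext y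
    rw [List.replicate_succ, List.foldr_cons, ih, primitive_tsum (measurable_hENN false)
      (F := fun i t => ENNReal.ofReal t ^ n i) (fun i => by fun_prop)]
    congr 1 with i
    rw [primitive_hENN_false_pow (hn i), pow_succ]
    ring

def zetaIndices (p : ℕ) : Set (Fin p → ℕ) := {f | StrictAnti f ∧ ∀ i, 0 < f i}

theorem cons_mem_zetaIndices_iff {p : ℕ} (N : ℕ) (g : Fin p → ℕ) :
    (Fin.cons N g : Fin (p + 1) → ℕ) ∈ zetaIndices (p + 1) ↔
      g ∈ zetaIndices p ∧ Finset.univ.sup g < N := by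
  have hanti : StrictAnti (Fin.cons N g : Fin (p + 1) → ℕ) ↔ (∀ j, g j < N) ∧ StrictAnti g :=
    Fin.strictMono_cons (α := ℕᵒᵈ)
  simp only [zetaIndices, mem_ofPred_eq, hanti, Fin.forall_fin_succ, Fin.cons_zero, Fin.cons_succ]
  constructor
  · rintro ⟨⟨hlt, hg⟩, hN, hpos⟩
    exact ⟨⟨hg, hpos⟩, (Finset.sup_lt_iff hN).2 fun j _ => hlt j⟩
  · rintro ⟨⟨hg, hpos⟩, hsup⟩
    have hN : 0 < N := (Nat.zero_le _).trans_lt hsup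
    exact ⟨⟨fun j => (Finset.sup_lt_iff hN).1 hsup j (Finset.mem_univ j), hg⟩, hN, hpos⟩

def zetaIndicesSuccEquiv (p : ℕ) : zetaIndices (p + 1) ≃ zetaIndices p × ℕ where
  toFun f :=
    (⟨Fin.tail f.1, ((cons_mem_zetaIndices_iff _ _).1 ((Fin.cons_self_tail f.1).symm ▸ f.2)).1⟩,
      f.1 0 - Finset.univ.sup (Fin.tail f.1) - 1)
  invFun x := ⟨Fin.cons (Finset.univ.sup x.1.1 + x.2 + 1) x.1.1,
    (cons_mem_zetaIndices_iff _ _).2 ⟨x.1.2, by omega⟩⟩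
  left_inv f := by
    have hlt := ((cons_mem_zetaIndices_iff _ _).1 ((Fin.cons_self_tail f.1).symm ▸ f.2)).2
    ext1
    dsimp only
    conv_rhs => rw [← Fin.cons_self_tail f.1]
    congr 1
    omega
  right_inv x := by
    ext <;> simp
    omega

theorem tsum_zetaIndices_succ {p : ℕ} (F : (Fin (p + 1) → ℕ) → ℝ≥0∞) :
    ∑' f : zetaIndices (p + 1), F f =
      ∑' g : zetaIndices p, ∑' m, F (Fin.cons (Finset.univ.sup g.1 + m + 1) g.1) := by
  rw [← (zetaIndicesSuccEquiv p).symm.tsum_eq, ENNReal.tsum_prod']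
  rfl

theorem sup_cons_of_sup_lt {p : ℕ} {N : ℕ} {g : Fin p → ℕ} (h : Finset.univ.sup g < N) :
    Finset.univ.sup (Fin.cons N g : Fin (p + 1) → ℕ) = N := by
  rw [Fin.univ_succ, Finset.sup_cons, Finset.sup_map]
  simp [Function.comp_def, h.le]

noncomputable def zetaTerm (k : List ℕ) (f : Fin k.length → ℕ) : ℝ≥0∞ :=
  ∏ i, (f i : ℝ≥0∞)⁻¹ ^ k.get i

theorem zetaTerm_cons (a : ℕ) (k : List ℕ) (N : ℕ) (g : Fin k.length → ℕ) :
    zetaTerm (a :: k) (Fin.cons N g) = (N : ℝ≥0∞)⁻¹ ^ a * zetaTerm k g := by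
  simp [zetaTerm, Fin.prod_univ_succ]

/-- `Finset.univ.sup f` is the leading index `n₁ = f 0` (and `0` for the empty tuple), so this is
the multiple polylogarithm `Li_k(y) = ∑_{n₁ > ⋯ > n_p > 0} y^{n₁} / (n₁^{k₁} ⋯ n_p^{k_p})`. -/
noncomputable def multiPolylog (k : List ℕ) (y : ℝ) : ℝ≥0∞ :=
  ∑' f : zetaIndices k.length, zetaTerm k f * ENNReal.ofReal y ^ Finset.univ.sup f.1

theorem tsum_zetaIndices_zero (F : zetaIndices 0 → ℝ≥0∞) :
    ∑' f, F f = F ⟨Fin.elim0, fun i => i.elim0, fun i => i.elim0⟩ :=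
  tsum_eq_single _ fun _ hf => (hf (Subsingleton.elim _ _)).elim

theorem multiPolylog_nil (y : ℝ) : multiPolylog [] y = 1 :=
  (tsum_zetaIndices_zero _).trans (by simp [zetaTerm])

theorem multiPolylog_cons (a : ℕ) (k : List ℕ) (y : ℝ) :
    multiPolylog (a :: k) y = ∑' g : zetaIndices k.length, ∑' m,
      ((Finset.univ.sup g.1 + m + 1 : ℕ) : ℝ≥0∞)⁻¹ ^ a * zetaTerm k g *
        ENNReal.ofReal y ^ (Finset.univ.sup g.1 + m + 1) := by
  rw [multiPolylog]
  refine (tsum_zetaIndices_succ (p := k.length)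
    fun f => zetaTerm (a :: k) f * ENNReal.ofReal y ^ Finset.univ.sup f).trans ?_
  congr 1 with g
  congr 1 with m
  rw [sup_cons_of_sup_lt (by omega), zetaTerm_cons]

theorem primitive_hENN_true_multiPolylog (k : List ℕ) {y : ℝ} (hy : y ∈ Icc 0 1) :
    primitive (hENN true) (multiPolylog k) y =
      ∑' x : zetaIndices k.length × ℕ,
        zetaTerm k x.1 * ((Finset.univ.sup x.1.1 + x.2 + 1 : ℕ) : ℝ≥0∞)⁻¹ *
          ENNReal.ofReal y ^ (Finset.univ.sup x.1.1 + x.2 + 1) := by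
  unfold multiPolylog
  rw [primitive_tsum (measurable_hENN true) (fun _ => by fun_prop), ENNReal.tsum_prod']
  congr 1 with g
  rw [primitive_hENN_true_pow _ hy, ← ENNReal.tsum_mul_left]
  congr 1 with m
  ring

theorem word_cons_reverse (a : ℕ) (k : List ℕ) :
    (word (a :: k)).reverse = List.replicate (a - 1) false ++ true :: (word k).reverse := by
  simp [word]

theorem iteratedIntegral_word_eqOn_multiPolylog :
    ∀ k : List ℕ, (∀ a ∈ k, 0 < a) →
      EqOn (iteratedIntegral hENN (word k).reverse) (multiPolylog k) (Icc 0 1)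
  | [], _ => fun y _ => by simp [word, multiPolylog_nil]
  | a :: k, hk => by
    have ih := iteratedIntegral_word_eqOn_multiPolylog k
      fun b hb => hk b (List.mem_cons_of_mem _ hb)
    obtain ⟨a, rfl⟩ : ∃ b, a = b + 1 := ⟨a - 1, by have := hk a List.mem_cons_self; omega⟩
    intro y hy
    rw [word_cons_reverse, iteratedIntegral_append, iteratedIntegral_cons,
      eqOn_foldr_primitive hENN _ (fun y hy => (eqOn_primitive _ ih hy).trans
        (primitive_hENN_true_multiPolylog k hy)) hy,
      foldr_replicate_false_tsum _ (fun _ => by omega), multiPolylog_cons]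
    dsimp only
    rw [ENNReal.tsum_prod']
    congr 1 with g
    congr 1 with m
    simp only [Nat.add_sub_cancel]
    ring

theorem tsum_inv_add_succ_sq_le (n : ℕ) :
    ∑' m : ℕ, ((n + m + 1 : ℕ) : ℝ≥0∞)⁻¹ ^ 2 ≤ 2 * ((n + 1 : ℕ) : ℝ≥0∞)⁻¹ := by
  refine ENNReal.tsum_le_of_sum_range_le fun K => ?_
  have hreal : ∑ m ∈ Finset.range K, (((n + m + 1 : ℕ) : ℝ) ^ 2)⁻¹ ≤ 2 / (n + 1) := by
    have := sum_Ioo_inv_sq_le (α := ℝ) n (n + 1 + K)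
    rw [← Finset.Ico_add_one_left_eq_Ioo, Finset.sum_Ico_eq_sum_range,
      Nat.add_sub_cancel_left] at this
    simpa only [Nat.add_right_comm n 1] using this
  calc ∑ m ∈ Finset.range K, ((n + m + 1 : ℕ) : ℝ≥0∞)⁻¹ ^ 2
      = ENNReal.ofReal (∑ m ∈ Finset.range K, (((n + m + 1 : ℕ) : ℝ) ^ 2)⁻¹) := by
        rw [ENNReal.ofReal_sum_of_nonneg fun m _ => by positivity]
        refine Finset.sum_congr rfl fun m _ => ?_
        rw [ofReal_inv_of_pos (by positivity), ofReal_pow (by positivity), ofReal_natCast,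
          ENNReal.inv_pow]
    _ ≤ ENNReal.ofReal (2 / (n + 1)) := ENNReal.ofReal_le_ofReal hreal
    _ = 2 * ((n + 1 : ℕ) : ℝ≥0∞)⁻¹ := by
        rw [ENNReal.ofReal_div_of_pos (by positivity), div_eq_mul_inv]
        norm_cast

theorem tsum_tsum_zetaTerm_le {k : List ℕ} {c : ℕ → ℝ≥0∞}
    (hc : ∀ N : ℕ, 0 < N → c N ≤ (N : ℝ≥0∞)⁻¹ ^ 2) :
    ∑' g : zetaIndices k.length, ∑' m, c (Finset.univ.sup g.1 + m + 1) * zetaTerm k g ≤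
      2 * ∑' g : zetaIndices k.length,
        zetaTerm k g * ((Finset.univ.sup g.1 + 1 : ℕ) : ℝ≥0∞)⁻¹ := by
  rw [← ENNReal.tsum_mul_left]
  refine ENNReal.tsum_le_tsum fun g => ?_
  calc ∑' m, c (Finset.univ.sup g.1 + m + 1) * zetaTerm k g
      = (∑' m, c (Finset.univ.sup g.1 + m + 1)) * zetaTerm k g := ENNReal.tsum_mul_right
    _ ≤ (2 * ((Finset.univ.sup g.1 + 1 : ℕ) : ℝ≥0∞)⁻¹) * zetaTerm k g := by
        gcongr
        exact (ENNReal.tsum_le_tsum fun m => hc _ (Nat.succ_pos _)).trans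
          (tsum_inv_add_succ_sq_le _)
    _ = 2 * (zetaTerm k g * ((Finset.univ.sup g.1 + 1 : ℕ) : ℝ≥0∞)⁻¹) := by ring

/-- Up to the shift `n₁ ↦ n₁ + 1` this is `ζ(k₁ + 1, k₂, …, k_p)`; each step of the induction sums
out the leading index with `∑_{M > n} M⁻² ≤ 2 / (n + 1)`. -/
theorem tsum_zetaTerm_mul_inv_sup_succ_ne_top :
    ∀ k : List ℕ, (∀ a ∈ k, 0 < a) →
      ∑' g : zetaIndices k.length, zetaTerm k g * ((Finset.univ.sup g.1 + 1 : ℕ) : ℝ≥0∞)⁻¹ ≠ ∞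
  | [], _ => by
    refine (tsum_zetaIndices_zero _).trans_ne ?_
    simp [zetaTerm]
  | b :: k, hk => by
    have ih := tsum_zetaTerm_mul_inv_sup_succ_ne_top k fun a ha => hk a (List.mem_cons_of_mem _ ha)
    have hb : b ≠ 0 := (hk b List.mem_cons_self).ne'
    refine ne_top_of_le_ne_top (ENNReal.mul_ne_top (ofNat_ne_top (n := 2)) ih) ?_
    refine ((tsum_zetaIndices_succ (p := k.length) fun f => zetaTerm (b :: k) f *
      ((Finset.univ.sup f + 1 : ℕ) : ℝ≥0∞)⁻¹).trans ?_).trans_le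
      (tsum_tsum_zetaTerm_le (c := fun N => (N : ℝ≥0∞)⁻¹ ^ b * ((N + 1 : ℕ) : ℝ≥0∞)⁻¹) ?_)
    · congr 1 with g
      congr 1 with m
      rw [sup_cons_of_sup_lt (by omega), zetaTerm_cons]
      ring
    · intro N hN
      have hle : (N : ℝ≥0∞)⁻¹ ≤ 1 := ENNReal.inv_le_one.2 (by exact_mod_cast hN)
      rw [sq]
      gcongr
      · exact pow_le_of_le_one zero_le hle hb
      · exact_mod_cast N.le_succ

theorem multiPolylog_one_ne_top {a : ℕ} (ha : 2 ≤ a) {k : List ℕ} (hk : ∀ b ∈ k, 0 < b) :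
    multiPolylog (a :: k) 1 ≠ ∞ := by
  refine ne_top_of_le_ne_top
    (ENNReal.mul_ne_top (ofNat_ne_top (n := 2)) (tsum_zetaTerm_mul_inv_sup_succ_ne_top k hk)) ?_
  rw [multiPolylog_cons]
  simp only [ENNReal.ofReal_one, one_pow, mul_one]
  exact tsum_tsum_zetaTerm_le fun N hN =>
    pow_le_pow_of_le_one zero_le (ENNReal.inv_le_one.2 (by exact_mod_cast hN)) ha

theorem zeta_eq_toReal_multiPolylog (k : List ℕ) : zeta k = (multiPolylog k 1).toReal := by
  simp only [multiPolylog, ENNReal.ofReal_one, one_pow, mul_one]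
  rw [ENNReal.tsum_toReal_eq fun f => ?_, zeta]
  · refine tsum_congr fun f => ?_
    simp [zetaTerm, ENNReal.toReal_prod]
  · exact ENNReal.prod_ne_top fun i _ =>
      ENNReal.pow_ne_top (ENNReal.inv_ne_top.2 (by exact_mod_cast (f.2.2 i).ne'))

theorem iteratedIntegral_word_one {k : List ℕ} (hk : ∀ a ∈ k, 0 < a) :
    iteratedIntegral hENN (word k).reverse 1 = multiPolylog k 1 :=
  iteratedIntegral_word_eqOn_multiPolylog k hk ⟨zero_le_one, le_rfl⟩

theorem zeta_eq_simplexIntegral_word {k : List ℕ} (hk : ∀ a ∈ k, 0 < a) :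
    zeta k = simplexIntegral (word k) := by
  rw [zeta_eq_toReal_multiPolylog, simplexIntegral_eq_toReal, iteratedIntegral_word_one hk]

theorem iteratedIntegral_word_one_ne_top {k : List ℕ} (hk : ∀ a ∈ k, 0 < a) (hk1 : 2 ≤ k.headI) :
    iteratedIntegral hENN (word k).reverse 1 ≠ ∞ := by
  rw [iteratedIntegral_word_one hk]
  cases k with
  | nil => simp at hk1
  | cons a k => exact multiPolylog_one_ne_top hk1 fun b hb => hk b (List.mem_cons_of_mem _ hb)

theorem shuffle_relation (k l : List ℕ)
    (hk : ∀ a ∈ k, 0 < a) (hl : ∀ a ∈ l, 0 < a)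
    (hk1 : 2 ≤ k.headI) (hl1 : 2 ≤ l.headI) :
    simplexIntegral (word k) * simplexIntegral (word l)
        = ((shuffles (word k) (word l)).map simplexIntegral).sum ∧
      zeta k * zeta l
        = ((shuffles (word k) (word l)).map simplexIntegral).sum := by
  have hshuffle := simplexIntegral_mul_eq_sum_shuffles (iteratedIntegral_word_one_ne_top hk hk1)
    (iteratedIntegral_word_one_ne_top hl hl1)
  refine ⟨hshuffle, ?_⟩
  rw [zeta_eq_simplexIntegral_word hk, zeta_eq_simplexIntegral_word hl, hshuffle]
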